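/- Suppose a seminorm ‖·‖ on ℝ^n fails the NUNA property, i.e., there exist x ∈ ℝ^n and i ∈ {1,...,n-1} with ‖A_i x‖ > ‖x‖. Then isotonic projection is not contractive with respect to ‖·‖: there exist y, z ∈ ℝ^n with ‖iso(z) − iso(y)‖ > ‖z − y‖, where iso denotes Euclidean projection onto the cone {v : v_1 ≤ ... ≤ v_n}. -/

import Mathlib

open MeasureTheory Filter ProbabilityTheory

noncomputable section

/-- The isotonic (monotone nondecreasing) cone in `ℝ^n` with the Euclidean norm. -/
def monoCone (n : ℕ) : Set (EuclideanSpace ℝ (Fin n)) :=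
  {v | ∀ i j : Fin n, i ≤ j → v i ≤ v j}

open Classical in
/-- Euclidean projection onto the monotone cone (chosen minimizer of the distance). -/
def isoProj {n : ℕ} (x : EuclideanSpace ℝ (Fin n)) : EuclideanSpace ℝ (Fin n) :=
  if h : ∃ z ∈ monoCone n, ∀ w ∈ monoCone n, dist x z ≤ dist x w then h.choose else x

/-- The map `A_i` replacing entries `i` and `i+1` (0-based) by their common average. -/
def avgMap {n : ℕ} (i : ℕ) (x : EuclideanSpace ℝ (Fin n)) : EuclideanSpace ℝ (Fin n) :=
  WithLp.toLp 2 (fun j : Fin n => if h : i + 1 < n then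
      (if (j : ℕ) = i ∨ (j : ℕ) = i + 1
        then (x ⟨i, by omega⟩ + x ⟨i + 1, h⟩) / 2 else x j)
    else x j)

/-- One step of neighbor pooling: average entries `i`, `i+1` if they violate monotonicity. -/
def isoStep {n : ℕ} (i : ℕ) (x : EuclideanSpace ℝ (Fin n)) : EuclideanSpace ℝ (Fin n) :=
  if h : i + 1 < n then
    (if x ⟨i, by omega⟩ ≤ x ⟨i + 1, h⟩ then x else avgMap i x)
  else x

/-- Nonincreasing under neighbor averaging. -/
def NUNA {n : ℕ} (N : Seminorm ℝ (EuclideanSpace ℝ (Fin n))) : Prop :=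
  ∀ x : EuclideanSpace ℝ (Fin n), ∀ i : ℕ, i + 1 < n → N (avgMap i x) ≤ N x

/-- Average of the `m` entries of `x` starting at (0-based) index `a`. -/
def wavg {n : ℕ} (x : EuclideanSpace ℝ (Fin n)) (a m : ℕ) : ℝ :=
  (∑ t ∈ Finset.range m, if h : a + t < n then x ⟨a + t, h⟩ else 0) / m

/-- The sliding window seminorm with weight function `ψ`. -/
def swNorm {n : ℕ} (ψ : ℕ → ℝ) (x : EuclideanSpace ℝ (Fin n)) : ℝ :=
  sSup {r | ∃ a m : ℕ, 1 ≤ m ∧ a + m ≤ n ∧ r = |wavg x a m| * ψ m}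

/-!
Let `b` be a nondecreasing staircase whose steps have height `2 ‖A_i x‖`, except that it
is flat between coordinates `i` and `i + 1`. If `x_i ≥ x_{i+1}`, then `b + A_i x` is still
nondecreasing, and the residual `(b + x) - (b + A_i x)` is a nonnegative multiple of
`e_i - e_{i+1}`, whose inner product with `w - (b + A_i x)` is `≤ 0` for every nondecreasing `w`.
By the variational characterisation of the projection, `iso (b + x) = b + A_i x`, while
`iso b = b`. So `y = b`, `z = b + x` give `z - y = x` and `iso z - iso y = A_i x`. The case
`x_i < x_{i+1}` reduces to this one by replacing `x` with `-x`, as `A_i` is linear and the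
seminorm is even.
-/

open scoped InnerProductSpace

theorem sq_norm_sub_add_sq_norm_sub_le_of_inner_le_zero {E : Type*} [NormedAddCommGroup E]
    [InnerProductSpace ℝ E] {x p w : E} (h : ⟪x - p, w - p⟫_ℝ ≤ 0) :
    ‖x - p‖ ^ 2 + ‖w - p‖ ^ 2 ≤ ‖x - w‖ ^ 2 := by
  have : ‖x - w‖ ^ 2 = ‖x - p‖ ^ 2 - 2 * ⟪x - p, w - p⟫_ℝ + ‖w - p‖ ^ 2 := by
    rw [show x - w = (x - p) - (w - p) by abel]
    exact norm_sub_sq_real _ _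
  linarith

-- The variational inequality makes `p` the unique nearest point, so the choice in `isoProj`
-- returns it.
theorem isoProj_eq_of_inner_le_zero {n : ℕ} {x p : EuclideanSpace ℝ (Fin n)}
    (hp : p ∈ monoCone n) (H : ∀ w ∈ monoCone n, ⟪x - p, w - p⟫_ℝ ≤ 0) : isoProj x = p := by
  have hmin : ∀ w ∈ monoCone n, dist x p ≤ dist x w := by
    intro w hw
    rw [dist_eq_norm, dist_eq_norm, ← pow_le_pow_iff_left₀ (norm_nonneg _) (norm_nonneg _)
      two_ne_zero]
    nlinarith [sq_norm_sub_add_sq_norm_sub_le_of_inner_le_zero (H w hw), sq_nonneg ‖w - p‖]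
  have hex : ∃ q ∈ monoCone n, ∀ w ∈ monoCone n, dist x q ≤ dist x w := ⟨p, hp, hmin⟩
  rw [isoProj, dif_pos hex]
  obtain ⟨hq, hqmin⟩ := hex.choose_spec
  have hle := hqmin p hp
  rw [dist_eq_norm, dist_eq_norm] at hle
  have hqp : ‖hex.choose - p‖ ^ 2 ≤ 0 := by
    nlinarith [sq_norm_sub_add_sq_norm_sub_le_of_inner_le_zero (H _ hq),
      pow_le_pow_left₀ (norm_nonneg _) hle 2]
  exact sub_eq_zero.mp (norm_eq_zero.mp (pow_eq_zero_iff two_ne_zero |>.mp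
    (le_antisymm hqp (sq_nonneg _))))

theorem avgMap_neg {n : ℕ} (i : ℕ) (x : EuclideanSpace ℝ (Fin n)) :
    avgMap i (-x) = -avgMap i x := by
  ext j
  simp only [avgMap, PiLp.neg_apply]
  split_ifs <;> ring

theorem sub_avgMap {n i : ℕ} (hi : i + 1 < n) (x : EuclideanSpace ℝ (Fin n)) :
    x - avgMap i x =
      EuclideanSpace.single ⟨i, by omega⟩ ((x ⟨i, by omega⟩ - x ⟨i + 1, hi⟩) / 2) -
        EuclideanSpace.single ⟨i + 1, hi⟩ ((x ⟨i, by omega⟩ - x ⟨i + 1, hi⟩) / 2) := by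
  ext ⟨j, hj⟩
  simp only [avgMap, dif_pos hi, PiLp.sub_apply, PiLp.single_apply, Fin.ext_iff]
  split_ifs <;> first | omega | (subst_vars; ring)

theorem avgMap_apply_left_eq_right {n i : ℕ} (hi : i + 1 < n) (x : EuclideanSpace ℝ (Fin n)) :
    avgMap i x ⟨i, by omega⟩ = avgMap i x ⟨i + 1, hi⟩ := by
  simp [avgMap, hi]

theorem inner_single_sub_single_nonpos {n : ℕ} {a b : Fin n} (hab : a ≤ b) {d : ℝ} (hd : 0 ≤ d)
    {p w : EuclideanSpace ℝ (Fin n)} (hp : p a = p b) (hw : w ∈ monoCone n) :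
    ⟪EuclideanSpace.single a d - EuclideanSpace.single b d, w - p⟫_ℝ ≤ 0 := by
  rw [inner_sub_left, EuclideanSpace.inner_single_left, EuclideanSpace.inner_single_left]
  simp only [conj_trivial, PiLp.sub_apply, hp]
  nlinarith [hw a b hab]

-- Steps of height `M` at every index except between `i` and `i + 1`.
def stair (n i : ℕ) (M : ℝ) : EuclideanSpace ℝ (Fin n) :=
  WithLp.toLp 2 fun j => M * ((if (j : ℕ) ≤ i then (j : ℕ) else (j : ℕ) - 1 : ℕ) : ℝ)

theorem stair_apply (n i : ℕ) (M : ℝ) (j : Fin n) :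
    stair n i M j = M * ((if (j : ℕ) ≤ i then (j : ℕ) else (j : ℕ) - 1 : ℕ) : ℝ) := rfl

theorem stair_apply_left_eq_right {n i : ℕ} (hi : i + 1 < n) (M : ℝ) :
    stair n i M ⟨i, by omega⟩ = stair n i M ⟨i + 1, hi⟩ := by
  simp [stair_apply]

theorem stair_mem_monoCone {n : ℕ} (i : ℕ) {M : ℝ} (hM : 0 ≤ M) : stair n i M ∈ monoCone n := by
  intro j k hjk
  rw [stair_apply, stair_apply]
  gcongr
  have : (j : ℕ) ≤ k := hjk
  split_ifs <;> omega

theorem stair_add_mem_monoCone {n i : ℕ} (hi : i + 1 < n) {M : ℝ} {v : EuclideanSpace ℝ (Fin n)}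
    (hv : v ⟨i, by omega⟩ = v ⟨i + 1, hi⟩) (hM : ∀ j, 2 * |v j| ≤ M) :
    stair n i M + v ∈ monoCone n := by
  intro ⟨j, hj⟩ ⟨k, hk⟩ hjk
  have hjk' : j ≤ k := hjk
  have hM0 : 0 ≤ M := le_trans (by positivity) (hM ⟨j, hj⟩)
  by_cases hflat : j = k ∨ (j = i ∧ k = i + 1)
  · obtain rfl | ⟨rfl, rfl⟩ := hflat
    · rfl
    · rw [PiLp.add_apply, PiLp.add_apply, stair_apply_left_eq_right hi, hv]
  · simp only [PiLp.add_apply, stair_apply]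
    have hstep : (if j ≤ i then j else j - 1) + 1 ≤ (if k ≤ i then k else k - 1) := by
      split_ifs <;> omega
    have hstep' : ((if j ≤ i then j else j - 1 : ℕ) : ℝ) + 1 ≤ (if k ≤ i then k else k - 1 : ℕ) :=
      mod_cast hstep
    linarith [mul_le_mul_of_nonneg_left hstep' hM0, le_abs_self (v ⟨j, hj⟩),
      neg_abs_le (v ⟨k, hk⟩), hM ⟨j, hj⟩, hM ⟨k, hk⟩]

theorem isoProj_stair {n : ℕ} (i : ℕ) {M : ℝ} (hM : 0 ≤ M) : isoProj (stair n i M) = stair n i M :=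
  isoProj_eq_of_inner_le_zero (stair_mem_monoCone i hM) (by simp)

theorem isoProj_stair_add {n i : ℕ} (hi : i + 1 < n) {x : EuclideanSpace ℝ (Fin n)}
    (hx : x ⟨i + 1, hi⟩ ≤ x ⟨i, by omega⟩) {M : ℝ} (hM : ∀ j, 2 * |avgMap i x j| ≤ M) :
    isoProj (stair n i M + x) = stair n i M + avgMap i x := by
  refine isoProj_eq_of_inner_le_zero
    (stair_add_mem_monoCone hi (avgMap_apply_left_eq_right hi x) hM) fun w hw => ?_
  rw [add_sub_add_left_eq_sub, sub_avgMap hi]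
  refine inner_single_sub_single_nonpos (Fin.mk_le_mk.2 (Nat.le_succ i)) (by linarith) ?_ hw
  simp only [PiLp.add_apply, stair_apply_left_eq_right hi, avgMap_apply_left_eq_right hi]

theorem exists_isoProj_sub_eq_avgMap {n i : ℕ} (hi : i + 1 < n) {x : EuclideanSpace ℝ (Fin n)}
    (hx : x ⟨i + 1, hi⟩ ≤ x ⟨i, by omega⟩) :
    ∃ y z : EuclideanSpace ℝ (Fin n), z - y = x ∧ isoProj z - isoProj y = avgMap i x := by
  set M := 2 * ‖avgMap i x‖
  have hM : ∀ j, 2 * |avgMap i x j| ≤ M := fun j => by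
    simpa [M] using PiLp.norm_apply_le (avgMap i x) j
  refine ⟨stair n i M, stair n i M + x, add_sub_cancel_left _ _, ?_⟩
  rw [isoProj_stair_add hi hx hM, isoProj_stair i (by positivity), add_sub_cancel_left]

theorem stmt3 (n : ℕ) (N : Seminorm ℝ (EuclideanSpace ℝ (Fin n)))
    (x : EuclideanSpace ℝ (Fin n)) (i : ℕ) (hi : i + 1 < n)
    (h : N x < N (avgMap i x)) :
    ∃ y z : EuclideanSpace ℝ (Fin n), N (z - y) < N (isoProj z - isoProj y) := by
  rcases le_total (x ⟨i + 1, hi⟩) (x ⟨i, by omega⟩) with hx | hx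
  · obtain ⟨y, z, hzy, hiso⟩ := exists_isoProj_sub_eq_avgMap hi hx
    exact ⟨y, z, by rwa [hzy, hiso]⟩
  · obtain ⟨y, z, hzy, hiso⟩ := exists_isoProj_sub_eq_avgMap (x := -x) hi (neg_le_neg hx)
    exact ⟨y, z, by rwa [hzy, hiso, avgMap_neg, map_neg_eq_map, map_neg_eq_map]⟩
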